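/- arXiv:0904.0262 — 5 statements merged into one kernel-verified Lean document; each statement's English description precedes it below -/
import Mathlib

section
/- For all integers ℓ ≥ 2 and k ≥ 3 there exists an integer n such that every finite set of at least n points in the plane contains ℓ collinear points or k points in strictly convex position. -/
noncomputable section

/-- A point in the plane. -/
abbrev Pt : Type := EuclideanSpace ℝ (Fin 2)

noncomputable instance : DecidableEq Pt := Classical.decEq _

/-- A finite point set is in general position if no three of its points are collinear. -/
def GenPos (P : Finset Pt) : Prop :=
  ∀ S ⊆ P, S.card = 3 → ¬ Collinear ℝ (S : Set Pt)

/-- A finite point set is in convex position if every point lies on the boundary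
of the convex hull of the set. -/
def ConvexPos (P : Finset Pt) : Prop :=
  ∀ p ∈ P, p ∈ frontier (convexHull ℝ (P : Set Pt))

/-- `v` is a corner of `P` if removing it changes the convex hull. -/
def IsCornerOf (P : Finset Pt) (v : Pt) : Prop :=
  convexHull ℝ ((P : Set Pt) \ {v}) ≠ convexHull ℝ (P : Set Pt)

/-- A finite point set is in strictly convex position if each of its points is a corner. -/
def StrictConvexPos (P : Finset Pt) : Prop :=
  ∀ v ∈ P, IsCornerOf P v

/-- `P` contains `k` points in convex position. -/
def HasConvex (P : Finset Pt) (k : ℕ) : Prop :=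
  ∃ S ⊆ P, S.card = k ∧ ConvexPos S

/-- `P` contains `k` points in strictly convex position. -/
def HasStrictConvex (P : Finset Pt) (k : ℕ) : Prop :=
  ∃ S ⊆ P, S.card = k ∧ StrictConvexPos S

/-- `P` contains `l` collinear points. -/
def HasCollinear (P : Finset Pt) (l : ℕ) : Prop :=
  ∃ S ⊆ P, S.card = l ∧ Collinear ℝ (S : Set Pt)

/-- The Erdős–Szekeres number: the least `n` such that every finite set of at least `n`
points in general position contains `k` points in convex position. -/
def ES (k : ℕ) : ℕ :=
  sInf {n : ℕ | ∀ P : Finset Pt, GenPos P → n ≤ P.card → HasConvex P k}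

/-- `X` is a `k`-hole of `P`: `k` points of `P` in strictly convex position whose
convex hull contains no other point of `P`. -/
def IsHole (P X : Finset Pt) (k : ℕ) : Prop :=
  X ⊆ P ∧ X.card = k ∧ StrictConvexPos X ∧
    convexHull ℝ (X : Set Pt) ∩ (P : Set Pt) = (X : Set Pt)

/-- `v` and `w` are visible with respect to `P`. -/
def Visible (P : Finset Pt) (v w : Pt) : Prop :=
  v ≠ w ∧ (P : Set Pt) ∩ segment ℝ v w = {v, w}

end

/-!
Enumerate the points and colour every increasing triple by the sign of its orientation. By the
Ramsey theorem for triples, a large enough set contains a long subsequence whose increasing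
triples all have the same sign. If the sign is zero the subsequence is collinear. Otherwise
(after reversing it) it is a counterclockwise chain, and each point of such a chain is a corner:
a cyclic shift of a chain is again a chain, so the point can be taken to be the first one, and
then the line through its two cyclic neighbours separates it from the other points.
-/

open Finset Function

section Ramsey

variable {α κ : Type*} [LinearOrder α] [Fintype κ]

def IsMonochromatic {d : ℕ} (c : (Fin d → α) → κ) (T : Finset α) (col : κ) : Prop :=
  ∀ x : Fin d → α, StrictMono x → (∀ i, x i ∈ T) → c x = col

/-- A set of this size contains `t` elements on which the colour of an increasing tuple depends
only on its first entry, provided sets of size `R s` contain monochromatic sets of size `s`. -/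
def endHomogeneousBound (R : ℕ → ℕ) : ℕ → ℕ
  | 0 => 0
  | t + 1 => R (endHomogeneousBound R t) + 1

def ramseyBound (r : ℕ) : ℕ → ℕ → ℕ
  | 0, s => s
  | d + 1, s => endHomogeneousBound (ramseyBound r d) (r * s)

theorem exists_endHomogeneous {d : ℕ}
    (ramsey : ∀ (s : ℕ) (c : (Fin d → α) → κ) (A : Finset α),
      ramseyBound (Fintype.card κ) d s ≤ #A → ∃ T ⊆ A, s ≤ #T ∧ ∃ col, IsMonochromatic c T col)
    (c : (Fin (d + 1) → α) → κ) (t : ℕ) (A : Finset α)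
    (hA : endHomogeneousBound (ramseyBound (Fintype.card κ) d) t ≤ #A) :
    ∃ T ⊆ A, #T = t ∧ ∃ f : α → κ,
      ∀ x : Fin (d + 1) → α, StrictMono x → (∀ i, x i ∈ T) → c x = f (x 0) := by
  induction t generalizing A with
  | zero =>
    exact ⟨∅, empty_subset _, rfl, fun a => c fun _ => a, fun x _ hx => by simpa using hx 0⟩
  | succ t ih =>
    simp only [endHomogeneousBound] at hA
    have hA0 : A.Nonempty := card_pos.mp (by omega)
    set a := A.min' hA0
    obtain ⟨T₀, hT₀, hT₀card, col, hcol⟩ :=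
      ramsey (endHomogeneousBound (ramseyBound (Fintype.card κ) d) t)
        (fun y => c (Fin.cons a y)) (A.erase a)
        (by rw [card_erase_of_mem (A.min'_mem hA0)]; omega)
    obtain ⟨T₁, hT₁, hT₁card, f, hf⟩ := ih T₀ hT₀card
    have ha : a ∉ T₁ := fun h => by simpa using hT₀ (hT₁ h)
    have hlt : ∀ b ∈ T₁, a < b := fun b hb =>
      (A.min'_le b (mem_of_mem_erase (hT₀ (hT₁ hb)))).lt_of_ne (ne_of_mem_of_not_mem hb ha).symm
    refine ⟨insert a T₁, insert_subset (A.min'_mem hA0) ((hT₁.trans hT₀).trans (erase_subset _ _)),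
      by rw [card_insert_of_notMem ha, hT₁card], update f a col, fun x hx hxT => ?_⟩
    have hmem : ∀ i, x i ≠ a → x i ∈ T₁ := fun i h => (mem_insert.mp (hxT i)).resolve_left h
    by_cases hx0 : x 0 = a
    · have htail : ∀ i, Fin.tail x i ∈ T₀ := fun i =>
        hT₁ (hmem _ (hx0 ▸ (hx (Fin.succ_pos i)).ne'))
      rw [hx0, update_self, ← hcol _ (hx.comp Fin.strictMono_succ) htail, ← hx0]
      exact congrArg c (Fin.cons_self_tail x).symm
    · have hxT₁ : ∀ i, x i ∈ T₁ := fun i =>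
        hmem i ((hlt _ (hmem 0 hx0)).trans_le (hx.monotone (Fin.zero_le i))).ne'
      rw [update_of_ne hx0, hf x hx hxT₁]

theorem exists_monochromatic [Nonempty κ] (d s : ℕ) (c : (Fin d → α) → κ) (A : Finset α)
    (hA : ramseyBound (Fintype.card κ) d s ≤ #A) :
    ∃ T ⊆ A, s ≤ #T ∧ ∃ col, IsMonochromatic c T col := by
  classical
  induction d generalizing s A with
  | zero => exact ⟨A, subset_rfl, hA, c Fin.elim0, fun x _ _ => congrArg c (Subsingleton.elim _ _)⟩
  | succ d ih =>
    obtain ⟨T, hTA, hTcard, f, hf⟩ := exists_endHomogeneous ih c _ A hA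
    obtain ⟨col, -, hcol⟩ := exists_le_card_fiber_of_mul_le_card_of_maps_to
      (fun a _ => mem_univ (f a)) univ_nonempty (hTcard.symm ▸ le_rfl : #(univ : Finset κ) * s ≤ #T)
    exact ⟨_, (filter_subset _ T).trans hTA, hcol, col, fun x hx hxT =>
      (hf x hx fun i => (mem_filter.mp (hxT i)).1).trans (mem_filter.mp (hxT 0)).2⟩

theorem exists_orderEmbedding_monochromatic [Fintype α] [Nonempty κ] (d s : ℕ)
    (c : (Fin d → α) → κ) (hα : ramseyBound (Fintype.card κ) d s ≤ Fintype.card α) :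
    ∃ v : Fin s ↪o α, ∃ col, ∀ x : Fin d → Fin s, StrictMono x → c (v ∘ x) = col := by
  obtain ⟨T, -, hT, col, hcol⟩ := exists_monochromatic d s c univ (by simpa using hα)
  obtain ⟨T', hT', rfl⟩ := exists_subset_card_eq hT
  exact ⟨T'.orderEmbOfFin rfl, col, fun x hx =>
    hcol _ ((T'.orderEmbOfFin rfl).strictMono.comp hx) fun i => hT' (orderEmbOfFin_mem _ _ _)⟩

end Ramsey

/-- Twice the signed area of the triangle `abc`; positive iff `a, b, c` turn counterclockwise. -/
noncomputable def ccw (a b c : Pt) : ℝ :=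
  (b 0 - a 0) * (c 1 - a 1) - (b 1 - a 1) * (c 0 - a 0)

lemma ccw_rotate (a b c : Pt) : ccw b c a = ccw a b c := by unfold ccw; ring

lemma ccw_reverse (a b c : Pt) : ccw c b a = -ccw a b c := by unfold ccw; ring

lemma ccw_self_left (a b : Pt) : ccw a b a = 0 := by unfold ccw; ring

lemma ccw_self_right (a b : Pt) : ccw a b b = 0 := by unfold ccw; ring

lemma convex_setOf_ccw_nonneg (a b : Pt) : Convex ℝ {x | 0 ≤ ccw a b x} := by
  intro x hx y hy s t hs ht hst
  obtain rfl : t = 1 - s := by linarith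
  have h : ccw a b (s • x + (1 - s) • y) = s * ccw a b x + (1 - s) * ccw a b y := by
    simp only [ccw, PiLp.add_apply, PiLp.smul_apply, smul_eq_mul]
    ring
  simp only [Set.mem_ofPred_eq] at hx hy ⊢
  rw [h]
  positivity

lemma exists_eq_smul_vadd_of_ccw_eq_zero {a b x : Pt} (hab : a ≠ b) (h : ccw a b x = 0) :
    ∃ r : ℝ, x = r • (b - a) +ᵥ a := by
  have hne : (b 0 - a 0) ^ 2 + (b 1 - a 1) ^ 2 ≠ 0 := by
    intro h0
    apply hab
    ext i
    fin_cases i <;> simp <;> nlinarith [sq_nonneg (b 0 - a 0), sq_nonneg (b 1 - a 1)]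
  -- `r` is the coordinate of the orthogonal projection of `x` onto the line `ab`
  refine ⟨((x 0 - a 0) * (b 0 - a 0) + (x 1 - a 1) * (b 1 - a 1)) /
    ((b 0 - a 0) ^ 2 + (b 1 - a 1) ^ 2), ?_⟩
  unfold ccw at h
  ext i
  fin_cases i <;> simp <;> field_simp
  · linear_combination -(b 1 - a 1) * h
  · linear_combination (b 0 - a 0) * h

lemma isCornerOf_of_convex {S : Finset Pt} {v : Pt} {C : Set Pt} (hv : v ∈ S) (hC : Convex ℝ C)
    (hSC : ∀ w ∈ S, w ≠ v → w ∈ C) (hvC : v ∉ C) : IsCornerOf S v := fun h =>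
  hvC <| convexHull_min (fun w hw => hSC w hw.1 hw.2) hC (h ▸ subset_convexHull ℝ _ hv)

lemma collinear_range_of_ccw_eq_zero {n : ℕ} {q : Fin (n + 2) → Pt} (hq : Injective q)
    (h : ∀ i j k, i < j → j < k → ccw (q i) (q j) (q k) = 0) : Collinear ℝ (Set.range q) := by
  rw [collinear_iff_exists_forall_eq_smul_vadd]
  refine ⟨q 0, q 1 - q 0, ?_⟩
  rintro _ ⟨i, rfl⟩
  rcases (by omega : i.val = 0 ∨ i.val = 1 ∨ 1 < i.val) with hi | hi | hi
  · exact ⟨0, by simp [show i = 0 from Fin.ext hi]⟩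
  · exact ⟨1, by simp [show i = 1 from Fin.ext hi]⟩
  · exact exists_eq_smul_vadd_of_ccw_eq_zero (hq.ne zero_ne_one) (h 0 1 i zero_lt_one hi)

def IsCCWChain {m : ℕ} (q : Fin m → Pt) : Prop :=
  ∀ ⦃i j k⦄, i < j → j < k → 0 < ccw (q i) (q j) (q k)

namespace IsCCWChain

variable {m : ℕ}

lemma comp_strictMono {q : Fin m → Pt} (hq : IsCCWChain q) {k : ℕ} {f : Fin k → Fin m}
    (hf : StrictMono f) : IsCCWChain (q ∘ f) :=
  fun _ _ _ hij hjk => hq (hf hij) (hf hjk)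

lemma comp_finRotate {q : Fin (m + 1) → Pt} (hq : IsCCWChain q) :
    IsCCWChain (q ∘ finRotate (m + 1)) := by
  intro i j k hij hjk
  have hval : ∀ a < k, (finRotate (m + 1) a : ℕ) = a + 1 := fun a ha =>
    coe_finRotate_of_ne_last (ha.trans_le (Fin.le_last k)).ne
  simp only [comp_apply]
  by_cases hk : k = Fin.last m
  · subst hk
    rw [finRotate_last, ccw_rotate]
    apply hq
    · rw [Fin.lt_def, hval i (hij.trans hjk)]
      simp
    · rw [Fin.lt_def, hval i (hij.trans hjk), hval j hjk]
      exact Nat.succ_lt_succ (Fin.lt_def.mp hij)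
  · apply hq <;> rw [Fin.lt_def]
    · rw [hval i (hij.trans hjk), hval j hjk]
      exact Nat.succ_lt_succ (Fin.lt_def.mp hij)
    · rw [hval j hjk, coe_finRotate_of_ne_last hk]
      exact Nat.succ_lt_succ (Fin.lt_def.mp hjk)

lemma isCornerOf_zero {q : Fin (m + 3) → Pt} (hq : IsCCWChain q) :
    IsCornerOf (univ.image q) (q 0) := by
  refine isCornerOf_of_convex (mem_image_of_mem q (mem_univ 0))
    (convex_setOf_ccw_nonneg (q (Fin.last _)) (q 1)) ?_ ?_
  · rintro _ hw hw0
    obtain ⟨i, -, rfl⟩ := mem_image.mp hw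
    have hi0 : (i : ℕ) ≠ 0 := fun h => hw0 (congrArg q (Fin.ext h))
    rcases (by omega : (i : ℕ) = 1 ∨ (i : ℕ) = m + 2 ∨ 1 < (i : ℕ) ∧ (i : ℕ) < m + 2) with
      h | h | ⟨h1, hl⟩
    · simp [show i = 1 from Fin.ext h, ccw_self_right]
    · simp [show i = Fin.last _ from Fin.ext h, ccw_self_left]
    · rw [Set.mem_ofPred_eq, ← ccw_rotate]
      exact (hq (Fin.lt_def.mpr h1) (Fin.lt_def.mpr hl)).le
  · rw [Set.mem_ofPred_eq, not_le, ccw_reverse, neg_neg_iff_pos]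
    exact hq zero_lt_one (by simp [Fin.lt_def])

lemma isCornerOf {q : Fin (m + 3) → Pt} (hq : IsCCWChain q) (j : Fin (m + 3)) :
    IsCornerOf (univ.image q) (q j) := by
  induction j using Fin.induction generalizing q with
  | zero => exact hq.isCornerOf_zero
  | succ j ih =>
    have h := ih hq.comp_finRotate
    rwa [image_comp, image_univ_equiv, comp_apply, finRotate_apply, Fin.coeSucc_eq_succ] at h

lemma strictConvexPos {q : Fin (m + 3) → Pt} (hq : IsCCWChain q) : StrictConvexPos (univ.image q) :=
  fun _ hv => by
    obtain ⟨j, -, rfl⟩ := mem_image.mp hv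
    exact hq.isCornerOf j

lemma hasStrictConvex {q : Fin m → Pt} (hq : IsCCWChain q) (hinj : Injective q) {P : Finset Pt}
    (hqP : ∀ i, q i ∈ P) {k : ℕ} (hk : 3 ≤ k) (hkm : k ≤ m) : HasStrictConvex P k := by
  obtain ⟨n, rfl⟩ : ∃ n, k = n + 3 := ⟨k - 3, by omega⟩
  refine ⟨univ.image (q ∘ Fin.castLE hkm), image_subset_iff.mpr fun i _ => hqP _, ?_,
    (hq.comp_strictMono (Fin.strictMono_castLE hkm)).strictConvexPos⟩
  rw [card_image_of_injective _ (hinj.comp (Fin.castLE_injective hkm)), card_univ,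
    Fintype.card_fin]

end IsCCWChain

lemma isCCWChain_comp_rev {m : ℕ} {q : Fin m → Pt}
    (h : ∀ i j k, i < j → j < k → ccw (q i) (q j) (q k) < 0) : IsCCWChain (q ∘ Fin.rev) :=
  fun i j k hij hjk => by
    simpa [ccw_reverse (q i.rev)] using h _ _ _ (Fin.rev_lt_rev.mpr hjk) (Fin.rev_lt_rev.mpr hij)

lemma hasCollinear_of_ccw_eq_zero {m : ℕ} (hm : 2 ≤ m) {q : Fin m → Pt} (hinj : Injective q)
    {P : Finset Pt} (hqP : ∀ i, q i ∈ P) (h : ∀ i j k, i < j → j < k → ccw (q i) (q j) (q k) = 0)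
    {l : ℕ} (hlm : l ≤ m) : HasCollinear P l := by
  obtain ⟨n, rfl⟩ : ∃ n, m = n + 2 := ⟨m - 2, by omega⟩
  obtain ⟨S, hS, hScard⟩ := exists_subset_card_eq (s := univ.image q) (n := l)
    (by rwa [card_image_of_injective _ hinj, card_univ, Fintype.card_fin])
  refine ⟨S, hS.trans (image_subset_iff.mpr fun i _ => hqP i), hScard,
    (collinear_range_of_ccw_eq_zero hinj h).subset fun x hx => ?_⟩
  obtain ⟨i, -, rfl⟩ := mem_image.mp (hS hx)
  exact ⟨i, rfl⟩

theorem stmt1_general (l k : ℕ) (hk : 3 ≤ k) :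
    ∃ n : ℕ, ∀ P : Finset Pt, n ≤ P.card →
      HasCollinear P l ∨ HasStrictConvex P k := by
  refine ⟨ramseyBound (Fintype.card SignType) 3 (max l k), fun P hP => ?_⟩
  let p : Fin #P → Pt := fun i => P.equivFin.symm i
  obtain ⟨v, col, hcol⟩ := exists_orderEmbedding_monochromatic 3 (max l k)
    (fun x => SignType.sign (ccw (p (x 0)) (p (x 1)) (p (x 2)))) (by simpa using hP)
  have hinj : Injective (p ∘ v) :=
    (Subtype.val_injective.comp P.equivFin.symm.injective).comp v.injective
  have hvP : ∀ i, (p ∘ v) i ∈ P := fun i => (P.equivFin.symm (v i)).2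
  have hsign : ∀ i j k, i < j → j < k → SignType.sign (ccw (p (v i)) (p (v j)) (p (v k))) = col :=
    fun i j k hij hjk => hcol ![i, j, k] (by simp [hij, hjk])
  cases col with
  | zero =>
    exact Or.inl (hasCollinear_of_ccw_eq_zero (by omega) hinj hvP
      (fun i j k hij hjk => sign_eq_zero_iff.mp (hsign i j k hij hjk)) le_sup_left)
  | pos =>
    exact Or.inr (IsCCWChain.hasStrictConvex
      (fun i j k hij hjk => sign_eq_one_iff.mp (hsign i j k hij hjk)) hinj hvP hk le_sup_right)
  | neg =>
    exact Or.inr ((isCCWChain_comp_rev fun i j k hij hjk =>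
      sign_eq_neg_one_iff.mp (hsign i j k hij hjk)).hasStrictConvex
      (hinj.comp Fin.rev_injective) (fun i => hvP _) hk le_sup_right)

theorem stmt1 (l k : ℕ) (hl : 2 ≤ l) (hk : 3 ≤ k) :
    ∃ n : ℕ, ∀ P : Finset Pt, n ≤ P.card →
      HasCollinear P l ∨ HasStrictConvex P k :=
  stmt1_general l k hk
end

section
/- If a finite set P of points in the plane contains a 5-hole, then P contains five pairwise visible points. (In particular, the corners of a 5-hole of P of minimum area are pairwise visible with respect to P.) -/
/-!
The corners of any 5-hole `X` of `P` are already pairwise visible: a point of `P` on the segment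
between two corners lies in `conv X ∩ P = X`, and a point of `X` strictly inside a segment
between two other points of `X` is not a corner.
-/

open Set

theorem convexHull_diff_singleton_eq {E : Type*} [AddCommGroup E] [Module ℝ E] {s : Set E} {p : E}
    (hp : p ∈ convexHull ℝ (s \ {p})) : convexHull ℝ (s \ {p}) = convexHull ℝ s := by
  refine (convexHull_mono sdiff_subset).antisymm (convexHull_min ?_ (convex_convexHull ℝ _))
  intro x hx
  by_cases hxp : x = p
  · exact hxp ▸ hp
  · exact subset_convexHull ℝ _ ⟨hx, hxp⟩

theorem convexHull_diff_singleton_eq_of_mem_segment {E : Type*} [AddCommGroup E] [Module ℝ E]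
    {s : Set E} {v w p : E} (hv : v ∈ s) (hw : w ∈ s) (hpv : p ≠ v) (hpw : p ≠ w)
    (hp : p ∈ segment ℝ v w) : convexHull ℝ (s \ {p}) = convexHull ℝ s :=
  convexHull_diff_singleton_eq <|
    segment_subset_convexHull (s := s \ {p}) ⟨hv, hpv.symm⟩ ⟨hw, hpw.symm⟩ hp

theorem StrictConvexPos.eq_or_eq_of_mem_segment {X : Finset Pt} (hX : StrictConvexPos X)
    {v w p : Pt} (hv : v ∈ X) (hw : w ∈ X) (hp : p ∈ X) (hpvw : p ∈ segment ℝ v w) :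
    p = v ∨ p = w := by
  by_contra! h
  exact hX p hp (convexHull_diff_singleton_eq_of_mem_segment hv hw h.1 h.2 hpvw)

theorem IsHole.visible {P X : Finset Pt} {k : ℕ} (hX : IsHole P X k) {v w : Pt} (hv : v ∈ X)
    (hw : w ∈ X) (hvw : v ≠ w) : Visible P v w := by
  obtain ⟨hXP, -, hstrict, hempty⟩ := hX
  refine ⟨hvw, Subset.antisymm ?_ ?_⟩
  · rintro p ⟨hpP, hpvw⟩
    have hpX : p ∈ (X : Set Pt) := hempty ▸ ⟨segment_subset_convexHull hv hw hpvw, hpP⟩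
    exact hstrict.eq_or_eq_of_mem_segment hv hw hpX hpvw
  · rintro x (rfl | rfl)
    · exact ⟨hXP hv, left_mem_segment ℝ _ _⟩
    · exact ⟨hXP hw, right_mem_segment ℝ _ _⟩

theorem stmt4 (P : Finset Pt) (h : ∃ X : Finset Pt, IsHole P X 5) :
    ∃ S ⊆ P, S.card = 5 ∧ ∀ v ∈ S, ∀ w ∈ S, v ≠ w → Visible P v w := by
  obtain ⟨X, hX⟩ := h
  exact ⟨X, hX.1, hX.2.1, fun _ hv _ hw hvw => hX.visible hv hw hvw⟩
end

section
/- For all integers ℓ ≥ 3 and odd k ≥ 3, there exists a finite set of exactly (ℓ−1)(k−1)/2 points in the plane in convex position that contains no ℓ collinear points and no k points in strictly convex position. -/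
/-!
Place `m = (k - 1) / 2` clusters of `l - 1` points each on the tangents to the parabola `y = x²`
at the abscissae `0, …, m - 1`, each cluster just to the right of its point of tangency. Every
point then maximizes one of the tangent functionals over the whole set, giving convex position.
A line through three of the points has one of them strictly between the other two, so it is the
tangent through that point, which carries only `l - 1` points. Any `2m + 1` of the points include
three from one cluster; these are collinear, so the middle one is not a corner.
-/

section General

variable {E : Type*}

lemma LinearMap.eq_of_sbtw_of_le [AddCommGroup E] [Module ℝ E] (φ : E →ₗ[ℝ] ℝ) {x y z : E}
    (h : Sbtw ℝ x y z) (hx : φ x ≤ φ y) (hz : φ z ≤ φ y) : φ x = φ y := by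
  obtain ⟨s, ⟨hs₀, hs₁⟩, rfl⟩ := h.mem_image_Ioo
  rw [AffineMap.lineMap_apply_module, map_add, map_smul, map_smul, smul_eq_mul,
    smul_eq_mul] at hx hz ⊢
  nlinarith

lemma Collinear.map_eq_of_map_eq [AddCommGroup E] [Module ℝ E] (φ : E →ₗ[ℝ] ℝ) {s : Set E}
    (hs : Collinear ℝ s) {x y : E} (hx : x ∈ s) (hy : y ∈ s) (hxy : x ≠ y) (h : φ x = φ y)
    {p : E} (hp : p ∈ s) : φ p = φ y := by
  obtain ⟨v, hv⟩ := (collinear_iff_of_mem hy).1 hs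
  obtain ⟨r, rfl⟩ := hv x hx
  obtain ⟨r', rfl⟩ := hv p hp
  have hr : r ≠ 0 := by rintro rfl; simp at hxy
  simp only [vadd_eq_add, map_add, map_smul, smul_eq_mul, add_eq_right, mul_eq_zero] at h ⊢
  exact Or.inr (h.resolve_left hr)

lemma Collinear.exists_sbtw [AddCommGroup E] [Module ℝ E] {S : Finset E}
    (hS : Collinear ℝ (S : Set E)) (hcard : 2 < S.card) :
    ∃ x ∈ S, ∃ y ∈ S, ∃ z ∈ S, Sbtw ℝ x y z := by
  obtain ⟨p, hp, q, hq, r, hr, hpq, hpr, hqr⟩ := Finset.two_lt_card.1 hcard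
  have hpqr : Collinear ℝ ({p, q, r} : Set E) :=
    hS.subset (by simp [Set.insert_subset_iff, hp, hq, hr])
  rcases hpqr.wbtw_or_wbtw_or_wbtw with h | h | h
  · exact ⟨p, hp, q, hq, r, hr, h, hpq.symm, hqr⟩
  · exact ⟨q, hq, r, hr, p, hp, h, hqr.symm, hpr.symm⟩
  · exact ⟨r, hr, p, hp, q, hq, h, hpr, hpq⟩

lemma convexHull_diff_singleton_of_sbtw [AddCommGroup E] [Module ℝ E] {s : Set E} {x y z : E}
    (hx : x ∈ s) (hz : z ∈ s) (h : Sbtw ℝ x y z) : convexHull ℝ (s \ {y}) = convexHull ℝ s := by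
  refine (convexHull_mono Set.sdiff_subset).antisymm
    (convexHull_min (fun p hp => ?_) (convex_convexHull ℝ _))
  by_cases hpy : p = y
  · subst hpy
    exact segment_subset_convexHull (s := s \ {p}) ⟨hx, h.ne_left.symm⟩ ⟨hz, h.ne_right.symm⟩
      (mem_segment_iff_wbtw.2 h.wbtw)
  · exact subset_convexHull ℝ _ ⟨hp, hpy⟩

lemma mem_frontier_convexHull_of_forall_le [NormedAddCommGroup E] [NormedSpace ℝ E]
    (φ : E →L[ℝ] ℝ) (hφ : φ ≠ 0) {s : Set E} {p : E} (hp : p ∈ s)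
    (hmax : ∀ q ∈ s, φ q ≤ φ p) : p ∈ frontier (convexHull ℝ s) := by
  refine ⟨subset_closure (subset_convexHull ℝ s hp), fun hint => hφ ?_⟩
  have hloc : IsLocalMax φ p := Filter.mem_of_superset (mem_interior_iff_mem_nhds.1 hint)
    (convexHull_min hmax (convex_halfSpace_le φ.toLinearMap.isLinear _))
  exact hloc.hasFDerivAt_eq_zero φ.hasFDerivAt

end General

lemma StrictConvexPos.not_sbtw {S : Finset Pt} (hS : StrictConvexPos S) {x y z : Pt}
    (hx : x ∈ S) (hz : z ∈ S) (h : Sbtw ℝ x y z) : y ∉ S :=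
  fun hy => hS y hy (convexHull_diff_singleton_of_sbtw hx hz h)

noncomputable section

/-- The point with abscissa `x` on the tangent to the parabola `y = x²` at abscissa `a`. -/
def tangentPt (a x : ℝ) : Pt := !₂[x, 2 * a * x - a ^ 2]

/-- `{p | φ p = a²}` is the tangent to the parabola `y = x²` at abscissa `a`, and the parabola
lies in `{p | φ p ≤ a²}`. -/
def tangentFunctional (a : ℝ) : Pt →L[ℝ] ℝ :=
  (2 * a) • EuclideanSpace.proj 0 - EuclideanSpace.proj 1

lemma tangentFunctional_apply (a : ℝ) (p : Pt) : tangentFunctional a p = 2 * a * p 0 - p 1 := by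
  simp [tangentFunctional]

lemma tangentFunctional_ne_zero (a : ℝ) : tangentFunctional a ≠ 0 := by
  intro h
  have := congrArg (fun φ : Pt →L[ℝ] ℝ => φ !₂[0, 1]) h
  simp [tangentFunctional_apply] at this

lemma tangentFunctional_tangentPt (a b x : ℝ) :
    tangentFunctional a (tangentPt b x) = a ^ 2 - (a - b) * (a + b - 2 * x) := by
  simp [tangentFunctional_apply, tangentPt]
  ring

lemma collinear_range_tangentPt (a : ℝ) : Collinear ℝ (Set.range (tangentPt a)) := by
  refine (collinear_iff_of_mem (Set.mem_range_self 0)).2 ⟨!₂[1, 2 * a], ?_⟩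
  rintro _ ⟨x, rfl⟩
  refine ⟨x, ?_⟩
  ext i
  fin_cases i <;> simp [tangentPt]
  ring

def clusterOffset (t : ℕ) : ℝ := t / (2 * t + 2)

lemma clusterOffset_nonneg (t : ℕ) : 0 ≤ clusterOffset t := by
  unfold clusterOffset; positivity

lemma clusterOffset_lt_half (t : ℕ) : clusterOffset t < 1 / 2 := by
  rw [clusterOffset, div_lt_iff₀ (by positivity)]
  linarith

lemma clusterOffset_injective : Function.Injective clusterOffset := by
  intro t s h
  rw [clusterOffset, clusterOffset, div_eq_div_iff (by positivity) (by positivity)] at h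
  exact_mod_cast (by linarith : (t : ℝ) = s)

/-- Offsets in `[0, 1/2)` keep the cluster of `i` strictly below the tangents at the other
integers. -/
def clusterPt (i t : ℕ) : Pt := tangentPt i (i + clusterOffset t)

lemma tangentFunctional_clusterPt_self (i t : ℕ) : tangentFunctional i (clusterPt i t) = i ^ 2 := by
  simp [clusterPt, tangentFunctional_tangentPt]

lemma tangentFunctional_clusterPt_lt {i j : ℕ} (hij : i ≠ j) (t : ℕ) :
    tangentFunctional i (clusterPt j t) < i ^ 2 := by
  rw [clusterPt, tangentFunctional_tangentPt]
  have h₀ := clusterOffset_nonneg t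
  have h₁ := clusterOffset_lt_half t
  rcases hij.lt_or_gt with h | h
  · have : (i : ℝ) + 1 ≤ j := by exact_mod_cast h
    nlinarith
  · have : (j : ℝ) + 1 ≤ i := by exact_mod_cast h
    nlinarith

lemma floor_clusterPt (i t : ℕ) : ⌊clusterPt i t 0⌋₊ = i := by
  rw [Nat.floor_eq_iff (by simp [clusterPt, tangentPt]; linarith [clusterOffset_nonneg t])]
  simp only [clusterPt, tangentPt]
  constructor <;> simp <;> linarith [clusterOffset_nonneg t, clusterOffset_lt_half t]

lemma clusterPt_injective : Function.Injective (fun it : ℕ × ℕ => clusterPt it.1 it.2) := by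
  rintro ⟨i, t⟩ ⟨j, s⟩ h
  have hij : i = j := by simpa [floor_clusterPt] using congrArg (fun p : Pt => ⌊p 0⌋₊) h
  subst hij
  have hts : clusterOffset t = clusterOffset s := by
    simpa [clusterPt, tangentPt] using congrArg (fun p : Pt => p 0) h
  rw [clusterOffset_injective hts]

def tangentConfig (m n : ℕ) : Finset Pt :=
  (Finset.range m ×ˢ Finset.range n).image (fun it => clusterPt it.1 it.2)

lemma mem_tangentConfig {m n : ℕ} {p : Pt} :
    p ∈ tangentConfig m n ↔ ∃ i < m, ∃ t < n, clusterPt i t = p := by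
  simp [tangentConfig, and_assoc]

lemma card_tangentConfig (m n : ℕ) : (tangentConfig m n).card = m * n := by
  rw [tangentConfig, Finset.card_image_of_injective _ clusterPt_injective, Finset.card_product,
    Finset.card_range, Finset.card_range]

lemma tangentFunctional_le_of_mem_tangentConfig {m n : ℕ} (i : ℕ) {p : Pt}
    (hp : p ∈ tangentConfig m n) : tangentFunctional i p ≤ i ^ 2 := by
  obtain ⟨j, -, t, -, rfl⟩ := mem_tangentConfig.1 hp
  rcases eq_or_ne i j with rfl | hij
  · exact (tangentFunctional_clusterPt_self i t).le
  · exact (tangentFunctional_clusterPt_lt hij t).le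

lemma exists_eq_clusterPt_of_tangentFunctional_eq {m n i : ℕ} {p : Pt}
    (hp : p ∈ tangentConfig m n) (h : tangentFunctional i p = i ^ 2) :
    ∃ t < n, clusterPt i t = p := by
  obtain ⟨j, -, t, ht, rfl⟩ := mem_tangentConfig.1 hp
  obtain rfl : i = j := by
    by_contra hij
    exact (tangentFunctional_clusterPt_lt hij t).ne h
  exact ⟨t, ht, rfl⟩

lemma convexPos_tangentConfig (m n : ℕ) : ConvexPos (tangentConfig m n) := by
  intro p hp
  obtain ⟨i, -, t, -, rfl⟩ := mem_tangentConfig.1 hp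
  refine mem_frontier_convexHull_of_forall_le _ (tangentFunctional_ne_zero i) hp fun q hq => ?_
  rw [tangentFunctional_clusterPt_self]
  exact tangentFunctional_le_of_mem_tangentConfig i hq

lemma card_le_of_collinear_of_subset_tangentConfig {m n : ℕ} {S : Finset Pt}
    (hSP : S ⊆ tangentConfig m n) (hS : Collinear ℝ (S : Set Pt)) (hcard : 2 < S.card) :
    S.card ≤ n := by
  obtain ⟨x, hx, y, hy, z, hz, hxyz⟩ := hS.exists_sbtw hcard
  obtain ⟨i, -, t, -, rfl⟩ := mem_tangentConfig.1 (hSP hy)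
  set φ := tangentFunctional i
  have hφy : φ (clusterPt i t) = i ^ 2 := tangentFunctional_clusterPt_self i t
  have hφx : φ x = φ (clusterPt i t) := φ.toLinearMap.eq_of_sbtw_of_le hxyz
    (hφy ▸ tangentFunctional_le_of_mem_tangentConfig i (hSP hx))
    (hφy ▸ tangentFunctional_le_of_mem_tangentConfig i (hSP hz))
  have hsub : S ⊆ (Finset.range n).image (clusterPt i) := by
    intro p hp
    have hφp : φ p = i ^ 2 :=
      hφy ▸ hS.map_eq_of_map_eq φ.toLinearMap hx hy hxyz.left_ne hφx hp
    obtain ⟨s, hs, rfl⟩ := exists_eq_clusterPt_of_tangentFunctional_eq (hSP hp) hφp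
    exact Finset.mem_image_of_mem _ (Finset.mem_range.2 hs)
  exact (Finset.card_le_card hsub).trans (Finset.card_image_le.trans (Finset.card_range n).le)

lemma not_hasCollinear_tangentConfig (m : ℕ) {n : ℕ} (hn : 2 ≤ n) :
    ¬ HasCollinear (tangentConfig m n) (n + 1) := by
  rintro ⟨S, hSP, hcard, hS⟩
  have := card_le_of_collinear_of_subset_tangentConfig hSP hS (by omega)
  omega

lemma not_hasStrictConvex_tangentConfig (m n : ℕ) :
    ¬ HasStrictConvex (tangentConfig m n) (2 * m + 1) := by
  rintro ⟨S, hSP, hcard, hS⟩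
  have hmaps : ∀ p ∈ S, ⌊p 0⌋₊ ∈ Finset.range m := by
    intro p hp
    obtain ⟨i, hi, t, -, rfl⟩ := mem_tangentConfig.1 (hSP hp)
    simpa [floor_clusterPt] using hi
  obtain ⟨i, -, hi⟩ := Finset.exists_lt_card_fiber_of_mul_lt_card_of_maps_to (n := 2) hmaps
    (by simp only [Finset.card_range]; omega)
  have hcol : Collinear ℝ (↑(S.filter fun p => ⌊p 0⌋₊ = i) : Set Pt) := by
    refine (collinear_range_tangentPt i).subset fun p hp => ?_
    obtain ⟨hpS, hpi⟩ := Finset.mem_filter.1 hp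
    obtain ⟨j, -, t, -, rfl⟩ := mem_tangentConfig.1 (hSP hpS)
    rw [floor_clusterPt] at hpi
    subst hpi
    exact ⟨_, rfl⟩
  obtain ⟨x, hx, y, hy, z, hz, hxyz⟩ := hcol.exists_sbtw hi
  exact hS.not_sbtw (Finset.mem_filter.1 hx).1 (Finset.mem_filter.1 hz).1 hxyz
    (Finset.mem_filter.1 hy).1

end

theorem stmt7_general (l k : ℕ) (hl : 3 ≤ l) (hodd : Odd k) :
    ∃ P : Finset Pt, P.card = (l - 1) * (k - 1) / 2 ∧ ConvexPos P ∧
      ¬ HasCollinear P l ∧ ¬ HasStrictConvex P k := by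
  obtain ⟨m, rfl⟩ := hodd
  obtain ⟨n, rfl⟩ : ∃ n, l = n + 1 := ⟨l - 1, by omega⟩
  refine ⟨tangentConfig m n, ?_, convexPos_tangentConfig m n,
    not_hasCollinear_tangentConfig m (by omega), not_hasStrictConvex_tangentConfig m n⟩
  rw [card_tangentConfig, Nat.add_sub_cancel, Nat.add_sub_cancel, mul_left_comm,
    Nat.mul_div_cancel_left _ two_pos, mul_comm]

theorem stmt7 (l k : ℕ) (hl : 3 ≤ l) (hk : 3 ≤ k) (hodd : Odd k) :
    ∃ P : Finset Pt, P.card = (l - 1) * (k - 1) / 2 ∧ ConvexPos P ∧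
      ¬ HasCollinear P l ∧ ¬ HasStrictConvex P k :=
  stmt7_general l k hl hodd
end

section
/- For all integers ℓ ≥ 3 and even k ≥ 4, there exists a finite set of exactly (ℓ−1)(k−2)/2 + 1 points in the plane in convex position that contains no ℓ collinear points and no k points in strictly convex position. -/
/-!
Put `m = (k - 2) / 2` groups of `l - 1` points on the chords of the parabola `y = x ^ 2` over
the intervals `[2g, 2g + 1]`, `g < m`, and one more point on the chord over `[2m, 2m + 1]`.
The line of each chord supports the whole configuration and meets it exactly in that chord's
group, so the set is in convex position and three collinear points always lie in one group;
hence no `l` points are collinear. Three points of one group are collinear, so one of them is not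
a corner of any subset containing all three: a strictly convex subset takes at most two points
per group, at most `2m + 1 = k - 1` in all.
-/

theorem Wbtw.eq_of_le_of_le {k V P : Type*} [Field k] [LinearOrder k] [IsStrictOrderedRing k]
    [AddCommGroup V] [Module k V] [AddTorsor V P] {f : P →ᵃ[k] k} {x y z : P}
    (h : Wbtw k x y z) (hyx : y ≠ x) (hyz : y ≠ z) (hx : f y ≤ f x) (hz : f y ≤ f z) :
    f x = f y ∧ f z = f y := by
  obtain ⟨t, ⟨ht0, ht1⟩, rfl⟩ := h
  have ht0' : t ≠ 0 := by rintro rfl; simp at hyx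
  have ht1' : t ≠ 1 := by rintro rfl; simp at hyz
  have hpos : 0 < t := lt_of_le_of_ne ht0 (Ne.symm ht0')
  have hlt : 0 < 1 - t := sub_pos.mpr (lt_of_le_of_ne ht1 ht1')
  rw [AffineMap.apply_lineMap, AffineMap.lineMap_apply_module, smul_eq_mul, smul_eq_mul]
    at hx hz ⊢
  have hzx : f z ≤ f x := by nlinarith
  have hxz : f x ≤ f z := by nlinarith
  rw [le_antisymm hxz hzx]
  constructor <;> ring

theorem mem_frontier_convexHull_of_isMinOn {E : Type*} [NormedAddCommGroup E] [NormedSpace ℝ E]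
    [CompleteSpace E] {s : Set E} {p : E} (f : StrongDual ℝ E) (hf : Function.Surjective f)
    (hp : p ∈ s) (hmin : IsMinOn f s p) : p ∈ frontier (convexHull ℝ s) := by
  refine ⟨subset_closure (subset_convexHull ℝ s hp), fun hint => ?_⟩
  have hhull : convexHull ℝ s ⊆ f ⁻¹' Set.Ici (f p) :=
    convexHull_min (fun q hq => hmin hq) ((convex_Ici (f p)).linear_preimage f.toLinearMap)
  have := interior_mono hhull hint
  rw [f.interior_preimage hf, interior_Ici] at this
  exact lt_irrefl (f p) this

theorem not_isCornerOf_of_wbtw {S : Finset Pt} {x y z : Pt} (hx : x ∈ S) (hz : z ∈ S)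
    (hxy : x ≠ y) (hzy : z ≠ y) (h : Wbtw ℝ x y z) : ¬ IsCornerOf S y := by
  have hy : y ∈ convexHull ℝ ((S : Set Pt) \ {y}) :=
    segment_subset_convexHull (s := (S : Set Pt) \ {y}) ⟨hx, hxy⟩ ⟨hz, hzy⟩ h.mem_segment
  refine not_not.mpr (le_antisymm (convexHull_mono Set.sdiff_subset) ?_)
  refine (convex_convexHull ℝ _).convexHull_subset_iff.mpr fun w hw => ?_
  by_cases hwy : w = y
  · exact hwy ▸ hy
  · exact subset_convexHull ℝ _ ⟨hw, hwy⟩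

theorem not_strictConvexPos_of_collinear {S : Finset Pt} {x y z : Pt} (hx : x ∈ S) (hy : y ∈ S)
    (hz : z ∈ S) (hxy : x ≠ y) (hxz : x ≠ z) (hyz : y ≠ z) (h : Collinear ℝ {x, y, z}) :
    ¬ StrictConvexPos S := by
  intro hS
  rcases h.wbtw_or_wbtw_or_wbtw with h | h | h
  · exact not_isCornerOf_of_wbtw hx hz hxy hyz.symm h (hS y hy)
  · exact not_isCornerOf_of_wbtw hy hx hyz hxz h (hS z hz)
  · exact not_isCornerOf_of_wbtw hz hy hxz.symm hxy.symm h (hS x hx)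

noncomputable section

namespace ParabolaChords

open Finset

/-- The chord of the parabola `y = x ^ 2` over `[2 * g, 2 * g + 1]`. -/
def chordLine (g : ℕ) (x : ℝ) : ℝ := (4 * g + 1) * x - 2 * g * (2 * g + 1)

def chordPoint (g : ℕ) (x : ℝ) : Pt := !₂[x, chordLine g x]

def chordFunctional (a : ℕ) : StrongDual ℝ Pt :=
  EuclideanSpace.proj 1 - (4 * a + 1 : ℝ) • EuclideanSpace.proj 0

lemma chordFunctional_apply (a : ℕ) (p : Pt) :
    chordFunctional a p = p 1 - (4 * a + 1) * p 0 := by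
  simp [chordFunctional]

lemma chordFunctional_surjective (a : ℕ) : Function.Surjective (chordFunctional a) :=
  fun t => ⟨!₂[0, t], by simp [chordFunctional_apply]⟩

lemma chordFunctional_chordPoint (a g : ℕ) (x : ℝ) :
    chordFunctional a (chordPoint g x) =
      -(2 * a * (2 * a + 1)) + 2 * (g - a) * (2 * x - 2 * g - 2 * a - 1) := by
  simp only [chordPoint, chordLine, chordFunctional_apply, Fin.isValue, Matrix.cons_val_one,
    Matrix.cons_val_fin_one, Matrix.cons_val_zero]
  ring

lemma chordFunctional_chordPoint_lt {a g : ℕ} (hga : g ≠ a) {x : ℝ}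
    (hx : x ∈ Set.Icc (2 * g : ℝ) (2 * g + 1)) (y : ℝ) :
    chordFunctional a (chordPoint a y) < chordFunctional a (chordPoint g x) := by
  simp only [chordFunctional_chordPoint, sub_self, mul_zero, zero_mul, add_zero]
  obtain ⟨hx₁, hx₂⟩ := hx
  rcases Nat.lt_or_gt_of_ne hga with h | h
  · have : (g : ℝ) + 1 ≤ a := by exact_mod_cast h
    nlinarith
  · have : (a : ℝ) + 1 ≤ g := by exact_mod_cast h
    nlinarith

lemma collinear_range_chordPoint (g : ℕ) : Collinear ℝ (Set.range (chordPoint g)) := by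
  rw [collinear_iff_exists_forall_eq_smul_vadd]
  refine ⟨chordPoint g 0, !₂[1, 4 * g + 1], ?_⟩
  rintro _ ⟨x, rfl⟩
  refine ⟨x, ?_⟩
  ext i
  fin_cases i
  · simp [chordPoint]
  · simp only [chordPoint, chordLine, Fin.mk_one, Fin.isValue, Matrix.cons_val_one,
      Matrix.cons_val_fin_one, mul_zero, zero_sub, vadd_eq_add, PiLp.add_apply, PiLp.smul_apply,
      smul_eq_mul]
    ring

variable {s : ℕ}

/-- The `n`-th point is the `(n % s)`-th of `s` points on chord `n / s`, at
`x = 2 * (n / s) + (n % s) / s`; below, the first division is real and the second natural. -/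
def chordX (s n : ℕ) : ℝ := n / s + (n / s : ℕ)

def point (s n : ℕ) : Pt := chordPoint (n / s) (chordX s n)

lemma chordX_mem_Icc (hs : 0 < s) (n : ℕ) :
    chordX s n ∈ Set.Icc (2 * (n / s : ℕ) : ℝ) (2 * (n / s : ℕ) + 1) := by
  have hs' : (0 : ℝ) < s := by exact_mod_cast hs
  have hn : (n : ℝ) / s = (n / s : ℕ) + (n % s : ℕ) / s := by
    have h : (n : ℝ) = s * (n / s : ℕ) + (n % s : ℕ) := by
      exact_mod_cast (Nat.div_add_mod n s).symm
    rw [h]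
    field_simp
  have hmod : ((n % s : ℕ) : ℝ) / s < 1 :=
    (div_lt_one hs').mpr (by exact_mod_cast Nat.mod_lt n hs)
  have hmod₀ : 0 ≤ ((n % s : ℕ) : ℝ) / s := by positivity
  unfold chordX
  constructor <;> linarith

lemma chordX_strictMono (hs : 0 < s) : StrictMono (chordX s) := by
  have hs' : (0 : ℝ) < s := by exact_mod_cast hs
  refine StrictMono.add_monotone (fun m n h => ?_) (fun m n h => ?_)
  · exact div_lt_div_of_pos_right (by exact_mod_cast h) hs'
  · exact_mod_cast Nat.div_le_div_right h

lemma point_apply_zero (n : ℕ) : point s n 0 = chordX s n := by simp [point, chordPoint]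

lemma point_injective (hs : 0 < s) : Function.Injective (point s) := fun m n h =>
  (chordX_strictMono hs).injective (by rw [← point_apply_zero, ← point_apply_zero, h])

lemma chordFunctional_point_le (hs : 0 < s) (m n : ℕ) :
    chordFunctional (n / s) (point s n) ≤ chordFunctional (n / s) (point s m) := by
  by_cases h : m / s = n / s
  · simp only [point, h, chordFunctional_chordPoint, sub_self, mul_zero, zero_mul, add_zero,
      le_refl]
  · exact (chordFunctional_chordPoint_lt h (chordX_mem_Icc hs m) _).le

lemma div_eq_of_wbtw (hs : 0 < s) {a b c : ℕ} (hab : a ≠ b) (hbc : b ≠ c)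
    (h : Wbtw ℝ (point s a) (point s b) (point s c)) : a / s = b / s ∧ c / s = b / s := by
  have hinj := point_injective hs
  obtain ⟨ha, hc⟩ := h.eq_of_le_of_le (f := (chordFunctional (b / s)).toLinearMap.toAffineMap)
    (hinj.ne hab.symm) (hinj.ne hbc) (chordFunctional_point_le hs a b)
    (chordFunctional_point_le hs c b)
  constructor <;> by_contra hne
  · exact (chordFunctional_chordPoint_lt hne (chordX_mem_Icc hs a) _).ne' ha
  · exact (chordFunctional_chordPoint_lt hne (chordX_mem_Icc hs c) _).ne' hc

lemma div_eq_of_collinear (hs : 0 < s) {a b c : ℕ} (hab : a ≠ b) (hac : a ≠ c) (hbc : b ≠ c)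
    (h : Collinear ℝ {point s a, point s b, point s c}) : a / s = b / s := by
  rcases h.wbtw_or_wbtw_or_wbtw with h | h | h
  · exact (div_eq_of_wbtw hs hab hbc h).1
  · have := div_eq_of_wbtw hs hbc hac.symm h
    omega
  · have := div_eq_of_wbtw hs hac.symm hab h
    omega

lemma collinear_point_image {T : Finset ℕ} {g : ℕ} (hT : ∀ n ∈ T, n / s = g) :
    Collinear ℝ (point s '' T) :=
  (collinear_range_chordPoint g).subset <| by
    rintro _ ⟨n, hn, rfl⟩
    exact ⟨chordX s n, by rw [point, hT n hn]⟩

lemma card_le_of_div_eq {T : Finset ℕ} {g : ℕ} (hs : 0 < s) (hT : ∀ n ∈ T, n / s = g) :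
    #T ≤ s := by
  have hsub : T ⊆ Ico (s * g) (s * g + s) := fun n hn => by
    have := Nat.div_add_mod n s
    have := Nat.mod_lt n hs
    rw [hT n hn] at *
    rw [mem_Ico]
    omega
  simpa using card_le_card hsub

def chordSet (s N : ℕ) : Finset Pt := (range N).image (point s)

lemma card_chordSet (hs : 0 < s) (N : ℕ) : #(chordSet s N) = N := by
  rw [chordSet, card_image_of_injective _ (point_injective hs), card_range]

lemma convexPos_chordSet (hs : 0 < s) (N : ℕ) : ConvexPos (chordSet s N) := by
  intro p hp
  obtain ⟨n, -, rfl⟩ := mem_image.mp hp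
  refine mem_frontier_convexHull_of_isMinOn _ (chordFunctional_surjective (n / s)) hp ?_
  rintro _ hq
  obtain ⟨m, -, rfl⟩ := mem_image.mp hq
  exact chordFunctional_point_le hs m n

lemma not_hasCollinear_chordSet (hs : 2 ≤ s) (N : ℕ) :
    ¬ HasCollinear (chordSet s N) (s + 1) := by
  rintro ⟨S, hS, hcard, hcol⟩
  obtain ⟨T, -, rfl⟩ := subset_image_iff.mp hS
  rw [card_image_of_injective _ (point_injective (by omega))] at hcard
  obtain ⟨n₀, hn₀⟩ : T.Nonempty := card_pos.mp (by omega)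
  have hgroup : ∀ n ∈ T, n / s = n₀ / s := by
    intro n hn
    by_cases hnn₀ : n = n₀
    · rw [hnn₀]
    obtain ⟨c, hc, hcn₀⟩ :=
      exists_mem_ne (s := T.erase n) (by rw [card_erase_of_mem hn]; omega) n₀
    have hcn := ne_of_mem_erase hc
    refine div_eq_of_collinear (by omega) hnn₀ (Ne.symm hcn) hcn₀.symm (hcol.subset ?_)
    simp only [coe_image, Set.insert_subset_iff, Set.singleton_subset_iff]
    exact ⟨Set.mem_image_of_mem _ hn, Set.mem_image_of_mem _ hn₀,
      Set.mem_image_of_mem _ (mem_of_mem_erase hc)⟩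
  have := card_le_of_div_eq (by omega) hgroup
  omega

lemma not_hasStrictConvex_chordSet (hs : 0 < s) (m : ℕ) :
    ¬ HasStrictConvex (chordSet s (m * s + 1)) (2 * m + 2) := by
  rintro ⟨S, hS, hcard, hstrict⟩
  obtain ⟨T, hT, rfl⟩ := subset_image_iff.mp hS
  have hinj := point_injective hs
  rw [card_image_of_injective _ hinj] at hcard
  have hmaps : ∀ n ∈ T.erase (m * s), n / s ∈ range m := by
    intro n hn
    have := mem_range.mp (hT (mem_of_mem_erase hn))
    have := ne_of_mem_erase hn
    rw [mem_range, Nat.div_lt_iff_lt_mul hs]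
    omega
  -- The point `m * s` is alone on chord `m`; pigeonhole puts three of the others on one chord.
  obtain ⟨g, -, hfiber⟩ := exists_lt_card_fiber_of_mul_lt_card_of_maps_to (n := 2) hmaps
    (by rw [card_range]; have := pred_card_le_card_erase (s := T) (a := m * s); omega)
  obtain ⟨a, ha, b, hb, c, hc, hab, hac, hbc⟩ := two_lt_card.mp hfiber
  simp only [mem_filter] at ha hb hc
  refine not_strictConvexPos_of_collinear (mem_image_of_mem _ (mem_of_mem_erase ha.1))
    (mem_image_of_mem _ (mem_of_mem_erase hb.1)) (mem_image_of_mem _ (mem_of_mem_erase hc.1))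
    (hinj.ne hab) (hinj.ne hac) (hinj.ne hbc) ?_ hstrict
  refine (collinear_point_image (s := s) (T := {a, b, c}) (g := g) ?_).subset ?_
  · simp only [mem_insert, mem_singleton]
    rintro n (rfl | rfl | rfl)
    exacts [ha.2, hb.2, hc.2]
  · simp [Set.insert_subset_iff]

end ParabolaChords

end

open ParabolaChords

theorem stmt8 (l k : ℕ) (hl : 3 ≤ l) (hk : 4 ≤ k) (heven : Even k) :
    ∃ P : Finset Pt, P.card = (l - 1) * (k - 2) / 2 + 1 ∧ ConvexPos P ∧
      ¬ HasCollinear P l ∧ ¬ HasStrictConvex P k := by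
  obtain ⟨m, rfl⟩ : ∃ m, k = 2 * m + 2 := by
    obtain ⟨t, rfl⟩ := heven
    exact ⟨t - 1, by omega⟩
  obtain ⟨s, rfl⟩ : ∃ s, l = s + 1 := ⟨l - 1, by omega⟩
  refine ⟨chordSet s (m * s + 1), ?_, convexPos_chordSet (by omega) _,
    not_hasCollinear_chordSet (by omega) _, not_hasStrictConvex_chordSet (by omega) m⟩
  rw [card_chordSet (by omega), Nat.add_sub_cancel, Nat.add_sub_cancel,
    show s * (2 * m) = m * s * 2 by ring, Nat.mul_div_cancel _ two_pos]
end

section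
/- For every finite set P of points in the plane there exists an injective map f : P → ℝ² such that the image f(P) is in general position, and for every subset S ⊆ P, if f(S) is in convex position then S is in convex position. -/
noncomputable section

/-!
Perturb the points one at a time, each new point avoiding the finitely many lines through
the points placed before it (a null set), by less than `r / 2`, where `r > 0` is chosen so that
every subset `S ⊆ P` not in convex position has a point `q` with `ball q r ⊆ conv S`.
After moving every point of `S` by at most `ε`, the closed `ε`-neighbourhood of the new hull
contains `conv S`; since the new hull is closed and convex, it still contains the ball of
radius `r - ε` around `q`, so the image of `q` is an interior point of it.
-/

open Metric Set Filter Topology Module Pointwise MeasureTheory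

section NormedSpace

variable {E : Type*} [NormedAddCommGroup E] [NormedSpace ℝ E]

theorem ContinuousLinearMap.exists_norm_lt_one_lt_apply (φ : E →L[ℝ] ℝ) {c : ℝ} (hc : c < ‖φ‖) :
    ∃ v, ‖v‖ < 1 ∧ c < φ v := by
  obtain ⟨v, hv, hcv⟩ := φ.exists_lt_apply_of_lt_opNorm hc
  rcases lt_abs.mp hcv with h | h
  · exact ⟨v, hv, h⟩
  · exact ⟨-v, by rwa [norm_neg], by rwa [map_neg]⟩

-- Separate `x ∉ D` from `D` by `φ`, and push `x` by `ε` in a direction where `φ` is almost `‖φ‖`.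
theorem ball_subset_of_ball_subset_add_closedBall {D : Set E} (hD : Convex ℝ D)
    (hDc : IsClosed D) {p : E} {r ε : ℝ} (hε : 0 < ε) (h : ball p r ⊆ D + closedBall 0 ε) :
    ball p (r - ε) ⊆ D := by
  intro x hx
  by_contra hxD
  obtain ⟨φ, u, hφD, hux⟩ := geometric_hahn_banach_closed_point hD hDc hxD
  obtain ⟨v, hv, hφv⟩ := φ.exists_norm_lt_one_lt_apply
    (sub_lt_self ‖φ‖ (div_pos (sub_pos.2 hux) hε))
  have hxv : x + ε • v ∈ ball p r := by
    rw [mem_ball, dist_eq_norm, add_sub_right_comm]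
    calc ‖x - p + ε • v‖ ≤ ‖x - p‖ + ‖ε • v‖ := norm_add_le _ _
      _ = ‖x - p‖ + ε * ‖v‖ := by rw [norm_smul, Real.norm_of_nonneg hε.le]
      _ < r - ε + ε * 1 := by rw [← dist_eq_norm]; gcongr; exact mem_ball.1 hx
      _ = r := by ring
  obtain ⟨d, hd, b, hb, hdb⟩ := h hxv
  have hφb : φ b ≤ ‖φ‖ * ε :=
    (le_abs_self _).trans ((φ.le_opNorm b).trans (by gcongr; simpa using hb))
  have hsum : φ x + ε * φ v = φ d + φ b := by
    rw [← smul_eq_mul, ← map_smul, ← map_add, ← map_add]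
    exact congrArg φ hdb.symm
  have hεv : ε * ‖φ‖ - (φ x - u) < ε * φ v := by
    have := mul_lt_mul_of_pos_left hφv hε
    rwa [mul_sub, mul_div_cancel₀ _ hε.ne'] at this
  linarith [hφD d hd]

theorem convexHull_subset_convexHull_image_add_closedBall {s : Set E} {f : E → E} {ε : ℝ}
    (hf : ∀ z ∈ s, dist (f z) z ≤ ε) :
    convexHull ℝ s ⊆ convexHull ℝ (f '' s) + closedBall 0 ε :=
  convexHull_min
    (fun z hz => ⟨f z, subset_convexHull ℝ _ (mem_image_of_mem f hz), z - f z,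
      by rw [mem_closedBall_zero_iff, ← dist_eq_norm']; exact hf z hz, add_sub_cancel _ _⟩)
    ((convex_convexHull ℝ _).add (convex_closedBall 0 ε))

theorem ball_subset_convexHull_image {s : Set E} (hs : s.Finite) {f : E → E} {q : E} {r ε : ℝ}
    (hε : 0 < ε) (hf : ∀ z ∈ s, dist (f z) z ≤ ε) (h : ball q r ⊆ convexHull ℝ s) :
    ball q (r - ε) ⊆ convexHull ℝ (f '' s) :=
  ball_subset_of_ball_subset_add_closedBall (convex_convexHull ℝ _)
    ((hs.image f).isClosed_convexHull ℝ) hε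
    (h.trans (convexHull_subset_convexHull_image_add_closedBall hf))

theorem affineSpan_pair_ne_top (hE : 2 ≤ finrank ℝ E) (u v : E) : line[ℝ, u, v] ≠ ⊤ := by
  intro h
  have hc := collinear_pair ℝ u v
  rw [collinear_iff_finrank_le_one, ← direction_affineSpan, h, AffineSubspace.direction_top,
    finrank_top] at hc
  omega

theorem exists_mem_forall_notMem_affineSpan_pair [MeasurableSpace E] [BorelSpace E]
    [FiniteDimensional ℝ E] (hE : 2 ≤ finrank ℝ E) {U : Set E} (hU : IsOpen U)
    (hUne : U.Nonempty) {Q : Set E} (hQ : Q.Countable) :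
    ∃ y ∈ U, ∀ u ∈ Q, ∀ v ∈ Q, y ∉ line[ℝ, u, v] := by
  let μ : Measure E := Measure.addHaar
  have hnull : μ (⋃ u ∈ Q, ⋃ v ∈ Q, (line[ℝ, u, v] : Set E)) = 0 :=
    (measure_biUnion_null_iff hQ).2 fun u _ =>
      (measure_biUnion_null_iff hQ).2 fun v _ =>
        Measure.addHaar_affineSubspace μ _ (affineSpan_pair_ne_top hE u v)
  obtain ⟨y, hyU, hy⟩ : (U \ ⋃ u ∈ Q, ⋃ v ∈ Q, (line[ℝ, u, v] : Set E)).Nonempty := by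
    refine nonempty_of_measure_ne_zero (μ := μ) ?_
    rw [measure_sdiff_null hnull]
    exact (hU.measure_pos μ hUne).ne'
  simp only [mem_iUnion, not_exists] at hy
  exact ⟨y, hyU, hy⟩

end NormedSpace

theorem GenPos.insert {Q : Finset Pt} (hQ : GenPos Q) {y : Pt}
    (hy : ∀ u ∈ Q, ∀ v ∈ Q, y ∉ line[ℝ, u, v]) : GenPos (insert y Q) := by
  intro T hT hcard hcol
  by_cases hyT : y ∈ T
  · have hTy : T.erase y ⊆ Q := Finset.subset_insert_iff.1 hT
    obtain ⟨u, v, huv, huvT⟩ : ∃ u v, u ≠ v ∧ T.erase y = {u, v} :=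
      Finset.card_eq_two.1 (by rw [Finset.card_erase_of_mem hyT, hcard])
    have hu : u ∈ T.erase y := by simp [huvT]
    have hv : v ∈ T.erase y := by simp [huvT]
    exact hy u (hTy hu) v (hTy hv) (hcol.mem_affineSpan_of_mem_of_ne
      (Finset.mem_of_mem_erase hu) (Finset.mem_of_mem_erase hv) hyT huv)
  · exact hQ T ((Finset.subset_insert_iff_of_notMem hyT).1 hT) hcard hcol

theorem exists_injOn_genPos_image_dist_lt (P : Finset Pt) {ε : ℝ} (hε : 0 < ε) :
    ∃ f : Pt → Pt, InjOn f P ∧ GenPos (P.image f) ∧ ∀ p ∈ P, dist (f p) p < ε := by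
  induction P using Finset.induction_on with
  | empty => exact ⟨id, by simp, by simp [GenPos], by simp⟩
  | insert a P ha ih =>
    obtain ⟨f, hinj, hgen, hdist⟩ := ih
    obtain ⟨y, hya, hy⟩ := exists_mem_forall_notMem_affineSpan_pair
      (by rw [finrank_euclideanSpace_fin]) isOpen_ball (nonempty_ball.2 hε)
      (P.image f).countable_toSet
    have hyP : y ∉ f '' P := fun h =>
      hy y (by simpa using h) y (by simpa using h) (left_mem_affineSpan_pair ℝ y y)
    have hfP : EqOn (Function.update f a y) f P := fun x hx =>
      Function.update_of_ne (ne_of_mem_of_not_mem hx ha) _ _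
    refine ⟨Function.update f a y, ?_, ?_, ?_⟩
    · rw [Finset.coe_insert, injOn_insert ha, Function.update_self, hfP.image_eq]
      exact ⟨hinj.congr hfP.symm, hyP⟩
    · rw [Finset.image_insert, Function.update_self, Finset.image_congr hfP]
      exact hgen.insert hy
    · intro p hp
      rcases Finset.mem_insert.1 hp with rfl | hp
      · simpa using hya
      · rw [hfP hp]; exact hdist p hp

theorem not_convexPos_iff {S : Finset Pt} :
    ¬ ConvexPos S ↔ ∃ p ∈ S, p ∈ interior (convexHull ℝ (S : Set Pt)) := by
  simp only [ConvexPos, not_forall, exists_prop]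
  refine exists_congr fun p => and_congr_right fun hp => ?_
  rw [frontier, Set.mem_sdiff, not_and_not_right]
  exact ⟨fun h => h (subset_closure (subset_convexHull ℝ _ hp)), fun h _ => h⟩

theorem exists_pos_forall_ball_subset_convexHull (P : Finset Pt) :
    ∃ r > 0, ∀ S ⊆ P, ¬ ConvexPos S → ∃ q ∈ S, ball q r ⊆ convexHull ℝ (S : Set Pt) := by
  have hsmall : ∀ᶠ r in 𝓝[>] (0 : ℝ), ∀ S ∈ P.powerset, ¬ ConvexPos S →
      ∃ q ∈ S, ball q r ⊆ convexHull ℝ (S : Set Pt) := by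
    refine (eventually_all_finset _).2 fun S _ => ?_
    by_cases hS : ConvexPos S
    · exact .of_forall fun _ h => (h hS).elim
    obtain ⟨q, hq, hint⟩ := not_convexPos_iff.1 hS
    obtain ⟨r, hr, hball⟩ := Metric.mem_nhds_iff.1 (mem_interior_iff_mem_nhds.1 hint)
    filter_upwards [Ioo_mem_nhdsGT hr] with r' hr' _
    exact ⟨q, hq, (ball_subset_ball hr'.2.le).trans hball⟩
  obtain ⟨r, hP, hr⟩ := (hsmall.and self_mem_nhdsWithin).exists
  exact ⟨r, hr, fun S hS => hP S (Finset.mem_powerset.2 hS)⟩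

theorem stmt9 (P : Finset Pt) :
    ∃ f : Pt → Pt, Set.InjOn f (P : Set Pt) ∧ GenPos (P.image f) ∧
      ∀ S ⊆ P, ConvexPos (S.image f) → ConvexPos S := by
  obtain ⟨r, hr, hball⟩ := exists_pos_forall_ball_subset_convexHull P
  obtain ⟨f, hinj, hgen, hdist⟩ := exists_injOn_genPos_image_dist_lt P (half_pos hr)
  refine ⟨f, hinj, hgen, fun S hSP hfS => ?_⟩
  by_contra hS
  obtain ⟨q, hqS, hq⟩ := hball S hSP hS
  have hinner : ball q (r - r / 2) ⊆ convexHull ℝ (S.image f : Set Pt) := by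
    rw [Finset.coe_image]
    exact ball_subset_convexHull_image S.finite_toSet (half_pos hr)
      (fun z hz => (hdist z (hSP hz)).le) hq
  refine not_convexPos_iff.2 ⟨f q, Finset.mem_image_of_mem f hqS, ?_⟩ hfS
  refine interior_maximal hinner isOpen_ball (mem_ball.2 ?_)
  linarith [hdist q (hSP hqS)]
end
end
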